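/- Let M = ℝ² × ℝ₊ carry the normal almost paracontact metric structure φ∂₁ = ∂₂, φ∂₂ = ∂₁, φ∂₃ = 0, ξ = ∂₃, η = dz, with Lorentz metric [g(∂ᵢ,∂ⱼ)] = diag(−2z, 2z, 1), for which α = (2z)⁻¹ and β = 0. Then the curve γ(t) = (cosh t, sinh t, 1/2) is a Legendre curve with null normal in M (g(γ̇,γ̇) = 1, η(γ̇) = 0, ∇_{γ̇}γ̇ ≠ 0, g(∇_{γ̇}γ̇,∇_{γ̇}γ̇) = 0), α(γ(t)) = 1, and its Cartan data are T = (sinh t, cosh t, 0), N = (cosh t, sinh t, −1), W = −½(cosh t, sinh t, 1) and κ = 0. -/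

import Mathlib

noncomputable section

namespace Stmt19

/-- Points/tangent vectors of ℝ³ with coordinates `(x, y, z)`. -/
abbrev V3 : Type := ℝ × ℝ × ℝ

/-- `φ∂₁ = ∂₂`, `φ∂₂ = ∂₁`, `φ∂₃ = 0`. -/
def phi (v : V3) : V3 := (v.2.1, v.1, 0)

/-- `ξ = ∂₃`. -/
def xi : V3 := (0, 0, 1)

/-- `η = dz`. -/
def eta (v : V3) : ℝ := v.2.2

/-- The Lorentz metric `diag(−2z, 2z, 1)`. -/
def g (p v w : V3) : ℝ :=
  -2 * p.2.2 * v.1 * w.1 + 2 * p.2.2 * v.2.1 * w.2.1 + v.2.2 * w.2.2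

/-- The connection associated to a Christoffel symbol field `Γ`. -/
def nablaOf (Γ : V3 → V3 → V3 → V3) (Xf Yf : V3 → V3) : V3 → V3 :=
  fun p => fderiv ℝ Yf p (Xf p) + Γ p (Xf p) (Yf p)

/-- The covariant derivative along a curve `γ` associated to `Γ`. -/
def DOf (Γ : V3 → V3 → V3 → V3) (γ : ℝ → V3) (Vf : ℝ → V3) : ℝ → V3 :=
  fun t => deriv Vf t + Γ (γ t) (deriv γ t) (Vf t)

end Stmt19

section Aux
open Stmt19

/-- Projection onto the third coordinate as a continuous linear map. -/
def Sproj : V3 →L[ℝ] ℝ :=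
  (ContinuousLinearMap.snd ℝ ℝ ℝ).comp (ContinuousLinearMap.snd ℝ ℝ (ℝ × ℝ))

lemma Sproj_apply (v : V3) : Sproj v = v.2.2 := rfl

lemma hasFDerivAt_gconst (p v w : V3) :
    HasFDerivAt (fun q : V3 => g q v w)
      ((-2 * v.1 * w.1 + 2 * v.2.1 * w.2.1) • Sproj) p := by
  have h : (fun q : V3 => g q v w)
      = fun q : V3 => (-2 * v.1 * w.1 + 2 * v.2.1 * w.2.1) * q.2.2 + v.2.2 * w.2.2 := by
    funext q; simp only [g]; ring
  rw [h]
  exact (Sproj.hasFDerivAt.const_mul _).add_const _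

lemma gamma_hasDerivAt (t : ℝ) :
    HasDerivAt (fun t => ((Real.cosh t, Real.sinh t, (1:ℝ)/2) : V3))
      ((Real.sinh t, Real.cosh t, 0) : V3) t :=
  HasDerivAt.prodMk (Real.hasDerivAt_cosh t) (HasDerivAt.prodMk (Real.hasDerivAt_sinh t) (hasDerivAt_const t _))

lemma T_hasDerivAt (t : ℝ) :
    HasDerivAt (fun t => ((Real.sinh t, Real.cosh t, (0:ℝ)) : V3))
      ((Real.cosh t, Real.sinh t, 0) : V3) t :=
  HasDerivAt.prodMk (Real.hasDerivAt_sinh t) (HasDerivAt.prodMk (Real.hasDerivAt_cosh t) (hasDerivAt_const t _))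

lemma N_hasDerivAt (t : ℝ) :
    HasDerivAt (fun t => ((Real.cosh t, Real.sinh t, (-1:ℝ)) : V3))
      ((Real.sinh t, Real.cosh t, 0) : V3) t :=
  HasDerivAt.prodMk (Real.hasDerivAt_cosh t) (HasDerivAt.prodMk (Real.hasDerivAt_sinh t) (hasDerivAt_const t _))

lemma W_hasDerivAt (t : ℝ) :
    HasDerivAt (fun t => ((-(1/2) * Real.cosh t, -(1/2) * Real.sinh t, (-(1/2):ℝ)) : V3))
      ((-(1/2) * Real.sinh t, -(1/2) * Real.cosh t, 0) : V3) t :=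
  HasDerivAt.prodMk ((Real.hasDerivAt_cosh t).const_mul _)
    (HasDerivAt.prodMk ((Real.hasDerivAt_sinh t).const_mul _) (hasDerivAt_const t _))

end Aux

open Stmt19 in
/-- On `M = ℝ² × ℝ₊` with `φ∂₁ = ∂₂`, `φ∂₂ = ∂₁`, `φ∂₃ = 0`,
`ξ = ∂₃`, `η = dz` and Lorentz metric `diag(−2z, 2z, 1)` (for whose Levi-Civita
connection `∇_X ξ = α(X − η(X)ξ) + βφX` with `α = (2z)⁻¹`, `β = 0`), the curve
`γ(t) = (cosh t, sinh t, 1/2)` is a Legendre curve with null normal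
(`g(γ̇,γ̇) = 1`, `η(γ̇) = 0`, `∇_{γ̇}γ̇ ≠ 0`, `g(∇_{γ̇}γ̇,∇_{γ̇}γ̇) = 0`),
`α(γ(t)) = 1`, and its Cartan data are `T = (sinh t, cosh t, 0)`,
`N = (cosh t, sinh t, −1)`, `W = −½(cosh t, sinh t, 1)`, `κ = 0`
(so `∇_{γ̇}N = 0` and `∇_{γ̇}W = −T`). -/
theorem legendre_null_normal_example
    (Γ : V3 → V3 → V3 → V3)
    (hΓsymm : ∀ (p u v : V3), p.2.2 > 0 → Γ p u v = Γ p v u)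
    (hΓadd : ∀ (p u v w : V3), p.2.2 > 0 → Γ p u (v + w) = Γ p u v + Γ p u w)
    (hΓsmul : ∀ (p : V3) (r : ℝ) (u v : V3), p.2.2 > 0 →
      Γ p u (r • v) = r • Γ p u v)
    (hmetric : ∀ Xf Yf Zf : V3 → V3,
      ContDiff ℝ (⊤ : ℕ∞) Xf → ContDiff ℝ (⊤ : ℕ∞) Yf → ContDiff ℝ (⊤ : ℕ∞) Zf →
      ∀ p : V3, 0 < p.2.2 →
        fderiv ℝ (fun q => g q (Yf q) (Zf q)) p (Xf p)
          = g p (nablaOf Γ Xf Yf p) (Zf p) + g p (Yf p) (nablaOf Γ Xf Zf p))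
    (γ : ℝ → V3) (hγ : ∀ t, γ t = (Real.cosh t, Real.sinh t, 1 / 2))
    (T : ℝ → V3) (hT : T = deriv γ)
    (N : ℝ → V3) (hN : N = DOf Γ γ T)
    (W : ℝ → V3)
    (hW : ∀ t, W t = -(1 / 2 : ℝ) • ((Real.cosh t, Real.sinh t, 1) : V3)) :
    (∀ Xf : V3 → V3, ContDiff ℝ (⊤ : ℕ∞) Xf → ∀ p : V3, 0 < p.2.2 →
      nablaOf Γ Xf (fun _ => xi) p
        = (2 * p.2.2)⁻¹ • (Xf p - eta (Xf p) • xi)) ∧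
    ∀ t : ℝ,
      g (γ t) (T t) (T t) = 1 ∧
      eta (T t) = 0 ∧
      N t ≠ 0 ∧
      g (γ t) (N t) (N t) = 0 ∧
      (2 * (γ t).2.2)⁻¹ = 1 ∧
      T t = (Real.sinh t, Real.cosh t, 0) ∧
      N t = (Real.cosh t, Real.sinh t, -1) ∧
      g (γ t) (N t) (W t) = 1 ∧
      g (γ t) (W t) (W t) = 0 ∧
      g (γ t) (T t) (W t) = 0 ∧
      DOf Γ γ N t = 0 ∧
      DOf Γ γ W t = -(T t) := by
  -- Step 1: metric compatibility on constant fields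
  have H2 : ∀ (p u v w : V3), 0 < p.2.2 →
      (-2 * v.1 * w.1 + 2 * v.2.1 * w.2.1) * u.2.2
        = g p (Γ p u v) w + g p v (Γ p u w) := by
    intro p u v w hp
    have h := hmetric (fun _ => u) (fun _ => v) (fun _ => w)
      contDiff_const contDiff_const contDiff_const p hp
    simp only [nablaOf, fderiv_const, Pi.zero_apply, ContinuousLinearMap.zero_apply,
      zero_add] at h
    rw [(hasFDerivAt_gconst p v w).fderiv] at h
    simpa [Sproj_apply] using h
  -- Step 2: the Christoffel symbols are determined (Koszul formula)
  have hΓeq : ∀ (p u v : V3), 0 < p.2.2 →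
      Γ p u v = ((2 * p.2.2)⁻¹ * (u.1 * v.2.2 + u.2.2 * v.1),
                 (2 * p.2.2)⁻¹ * (u.2.1 * v.2.2 + u.2.2 * v.2.1),
                 u.1 * v.1 - u.2.1 * v.2.1) := by
    intro p u v hp
    have hz : p.2.2 ≠ 0 := ne_of_gt hp
    have K : ∀ w : V3, 2 * g p (Γ p u v) w
        = (-2 * v.1 * w.1 + 2 * v.2.1 * w.2.1) * u.2.2
          + (-2 * u.1 * w.1 + 2 * u.2.1 * w.2.1) * v.2.2
          - (-2 * u.1 * v.1 + 2 * u.2.1 * v.2.1) * w.2.2 := by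
      intro w
      have e1 := H2 p u v w hp
      have e2 := H2 p v u w hp
      have e3 := H2 p w u v hp
      rw [hΓsymm p v u hp] at e2
      rw [hΓsymm p w u hp, hΓsymm p w v hp] at e3
      simp only [g] at e1 e2 e3 ⊢
      linear_combination e3 - e1 - e2
    have k1 := K (1, 0, 0)
    have k2 := K (0, 1, 0)
    have k3 := K (0, 0, 1)
    simp only [g] at k1 k2 k3
    norm_num at k1 k2 k3
    refine Prod.ext ?_ (Prod.ext ?_ ?_)
    · show (Γ p u v).1 = _
      field_simp
      linear_combination (-(1/2) : ℝ) * k1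
    · show (Γ p u v).2.1 = _
      field_simp
      linear_combination ((1/2) : ℝ) * k2
    · show (Γ p u v).2.2 = _
      linear_combination ((1/2) : ℝ) * k3
  constructor
  · intro Xf _ p hp
    have h0 : nablaOf Γ Xf (fun _ => xi) p = Γ p (Xf p) xi := by
      simp [nablaOf]
    rw [h0, hΓeq p (Xf p) xi hp]
    have hz : (2 * p.2.2) ≠ 0 := by positivity
    refine Prod.ext ?_ (Prod.ext ?_ ?_) <;>
      simp [xi, eta, Prod.smul_def, Prod.sub_def, smul_eq_mul] <;> ring
  · -- the curve computations
    have hγf : γ = fun t => ((Real.cosh t, Real.sinh t, 1/2) : V3) := funext hγ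
    subst hγf
    have hTt : ∀ t, T t = ((Real.sinh t, Real.cosh t, 0) : V3) := by
      intro t; rw [hT]; exact (gamma_hasDerivAt t).deriv
    have hTf : T = fun t => ((Real.sinh t, Real.cosh t, 0) : V3) := funext hTt
    subst hTf
    have hch : ∀ t : ℝ, Real.cosh t ^ 2 - Real.sinh t ^ 2 = 1 :=
      fun t => Real.cosh_sq_sub_sinh_sq t
    have hNt : ∀ t, N t = ((Real.cosh t, Real.sinh t, -1) : V3) := by
      intro t
      rw [hN]
      show deriv _ t + Γ _ (deriv _ t) _ = _
      rw [(T_hasDerivAt t).deriv, (gamma_hasDerivAt t).deriv,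
        hΓeq _ _ _ (by norm_num : (0:ℝ) < ((Real.cosh t, Real.sinh t, (1:ℝ)/2) : V3).2.2)]
      refine Prod.ext ?_ (Prod.ext ?_ ?_) <;> simp <;> (first | ring1 | linear_combination hch t | linear_combination (-1:ℝ) * hch t | linear_combination (1/2:ℝ) * hch t | linear_combination (-(1/2):ℝ) * hch t | linear_combination (1/4:ℝ) * hch t | linear_combination (-(1/4):ℝ) * hch t)
    have hNf : N = fun t => ((Real.cosh t, Real.sinh t, -1) : V3) := funext hNt
    subst hNf
    have hWt : ∀ t, W t
        = ((-(1/2) * Real.cosh t, -(1/2) * Real.sinh t, (-(1/2):ℝ)) : V3) := by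
      intro t; rw [hW]; norm_num [Prod.smul_mk]
    have hWf : W = fun t =>
        ((-(1/2) * Real.cosh t, -(1/2) * Real.sinh t, (-(1/2):ℝ)) : V3) := funext hWt
    subst hWf
    intro t
    have hp : (0:ℝ) < ((Real.cosh t, Real.sinh t, (1:ℝ)/2) : V3).2.2 := by norm_num
    refine ⟨?_, ?_, ?_, ?_, ?_, ?_, ?_, ?_, ?_, ?_, ?_, ?_⟩
    · simp [g]; (first | ring1 | linear_combination hch t | linear_combination (-1:ℝ) * hch t | linear_combination (1/2:ℝ) * hch t | linear_combination (-(1/2):ℝ) * hch t | linear_combination (1/4:ℝ) * hch t | linear_combination (-(1/4):ℝ) * hch t)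
    · simp [eta]
    · intro h
      have := congrArg (fun v : V3 => v.2.2) h
      norm_num at this
    · simp [g]; (first | ring1 | linear_combination hch t | linear_combination (-1:ℝ) * hch t | linear_combination (1/2:ℝ) * hch t | linear_combination (-(1/2):ℝ) * hch t | linear_combination (1/4:ℝ) * hch t | linear_combination (-(1/4):ℝ) * hch t)
    · norm_num
    · rfl
    · rfl
    · simp [g]; (first | ring1 | linear_combination hch t | linear_combination (-1:ℝ) * hch t | linear_combination (1/2:ℝ) * hch t | linear_combination (-(1/2):ℝ) * hch t | linear_combination (1/4:ℝ) * hch t | linear_combination (-(1/4):ℝ) * hch t)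
    · simp [g]; (first | ring1 | linear_combination hch t | linear_combination (-1:ℝ) * hch t | linear_combination (1/2:ℝ) * hch t | linear_combination (-(1/2):ℝ) * hch t | linear_combination (1/4:ℝ) * hch t | linear_combination (-(1/4):ℝ) * hch t)
    · simp [g]; (first | ring1 | linear_combination hch t | linear_combination (-1:ℝ) * hch t | linear_combination (1/2:ℝ) * hch t | linear_combination (-(1/2):ℝ) * hch t | linear_combination (1/4:ℝ) * hch t | linear_combination (-(1/4):ℝ) * hch t)
    · show deriv _ t + Γ _ (deriv _ t) _ = _
      rw [(N_hasDerivAt t).deriv, (gamma_hasDerivAt t).deriv, hΓeq _ _ _ hp]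
      refine Prod.ext ?_ (Prod.ext ?_ ?_) <;> simp <;> ring
    · show deriv _ t + Γ _ (deriv _ t) _ = _
      rw [(W_hasDerivAt t).deriv, (gamma_hasDerivAt t).deriv, hΓeq _ _ _ hp]
      refine Prod.ext ?_ (Prod.ext ?_ ?_) <;> simp <;> ring
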